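/- Let V ∈ L^∞(ℝ;ℝ) with |V(x)| → 0 as |x| → ∞ and ‖V⁻‖_{L^∞} ≤ 1, where V⁻ = max{−V,0}. For β > 0 let μ_j(β) denote the j-th most negative eigenvalue of the compact symmetric operator K_β = (−d²/dx² + β)^{−1}(V·) on H¹(ℝ) with inner product ⟨u,v⟩_β = ⟨u′,v′⟩_{L²} + β⟨u,v⟩_{L²}, ordered non-increasingly in absolute value, and set μ_j(0₊) = inf_{β>0} μ_j(β) (which exists in [−∞,0) since μ_j is increasing). Then for each j with μ_j(0₊) < −1/2, there exists a unique β_j ∈ (0,1] satisfying β_j = −(1/μ_j(β_j))·(2 + 1/μ_j(β_j)). -/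

import Mathlib

open MeasureTheory Filter Set
open scoped ENNReal Topology BigOperators

noncomputable section

/-- `g` is the weak derivative of `f : ℝ → ℂ`. -/
def HasWeakDeriv (f g : ℝ → ℂ) : Prop :=
  ∀ χ : ℝ → ℂ, ContDiff ℝ (⊤ : ℕ∞) χ → HasCompactSupport χ →
    ∫ x : ℝ, f x * deriv χ x = - ∫ x : ℝ, g x * χ x

/-- `f ∈ H¹(ℝ;ℂ)` with weak derivative `f'`. -/
def MemH1 (f f' : ℝ → ℂ) : Prop :=
  MemLp f 2 (volume : Measure ℝ) ∧ MemLp f' 2 (volume : Measure ℝ) ∧ HasWeakDeriv f f'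

/-- The Rayleigh-type quotient `⟨Vu,u⟩_{L²} / (‖u'‖_{L²}² + β‖u‖_{L²}²)`. -/
def rayleigh (V : ℝ → ℝ) (β : ℝ) (u u' : ℝ → ℂ) : ℝ :=
  (∫ x : ℝ, V x * ‖u x‖ ^ 2) /
    ((eLpNorm u' 2 (volume : Measure ℝ)).toReal ^ 2 +
      β * (eLpNorm u 2 (volume : Measure ℝ)).toReal ^ 2)

/-- The set of values `sup_{u ∈ U \ {0}} ⟨Vu,u⟩/(‖u'‖² + β‖u‖²)` over all
`j`-dimensional subspaces `U ⊂ H¹(ℝ)` (encoded by `j` linearly independent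
functions in `H¹`). -/
def muSet (V : ℝ → ℝ) (β : ℝ) (j : ℕ) : Set ℝ :=
  { m | ∃ f f' : Fin j → ℝ → ℂ,
      (∀ i, MemH1 (f i) (f' i)) ∧
      (∀ c : Fin j → ℂ, (fun x => ∑ i, c i * f i x) =ᵐ[volume] (0 : ℝ → ℂ) → c = 0) ∧
      m = ⨆ c : {c : Fin j → ℂ // c ≠ 0},
            rayleigh V β (fun x => ∑ i, (c : Fin j → ℂ) i * f i x)
              (fun x => ∑ i, (c : Fin j → ℂ) i * f' i x) }

/-- The min-max value `μ_j(β)`. -/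
def muMinMax (V : ℝ → ℝ) (j : ℕ) (β : ℝ) : ℝ := sInf (muSet V β j)

lemma integral_sq_eq (u : ℝ → ℂ) (hu : MemLp u 2 (volume : Measure ℝ)) :
    ∫ x : ℝ, ‖u x‖ ^ 2 = ((eLpNorm u 2 (volume : Measure ℝ)).toReal) ^ 2 := by
  have h := hu.eLpNorm_eq_integral_rpow_norm two_ne_zero ENNReal.ofNat_ne_top
  have key : ∀ a : ℝ, ‖u a‖ ^ ((2:ℝ≥0∞).toReal) = ‖u a‖ ^ 2 := by
    intro a
    rw [ENNReal.toReal_ofNat]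
    exact_mod_cast Real.rpow_natCast ‖u a‖ 2
  simp_rw [key, ENNReal.toReal_ofNat] at h
  have hI : (0:ℝ) ≤ ∫ x : ℝ, ‖u x‖ ^ 2 := by positivity
  rw [h, ENNReal.toReal_ofReal (by positivity)]
  rw [← Real.rpow_natCast ((∫ x : ℝ, ‖u x‖ ^ 2) ^ (2:ℝ)⁻¹) 2, ← Real.rpow_mul hI]
  norm_num

lemma integrable_sq (u : ℝ → ℂ) (hu : MemLp u 2 (volume : Measure ℝ)) :
    Integrable (fun x => ‖u x‖ ^ 2) (volume : Measure ℝ) := by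
  have h := hu.integrable_norm_rpow two_ne_zero ENNReal.ofNat_ne_top
  have key : ∀ a : ℝ, ‖u a‖ ^ ((2:ℝ≥0∞).toReal) = ‖u a‖ ^ 2 := by
    intro a
    rw [ENNReal.toReal_ofNat]
    exact_mod_cast Real.rpow_natCast ‖u a‖ 2
  simpa [key] using h

lemma integrable_Vsq (V : ℝ → ℝ) {C : ℝ} (hVm : AEStronglyMeasurable V (volume : Measure ℝ))
    (hC : ∀ᵐ x : ℝ, |V x| ≤ C) (u : ℝ → ℂ) (hu : MemLp u 2 (volume : Measure ℝ)) :
    Integrable (fun x => V x * ‖u x‖ ^ 2) (volume : Measure ℝ) := by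
  apply Integrable.mono' ((integrable_sq u hu).const_mul C)
  · exact hVm.mul ((hu.aestronglyMeasurable.norm.pow 2))
  · filter_upwards [hC] with x hx
    rw [Real.norm_eq_abs, abs_mul, abs_of_nonneg (by positivity : (0:ℝ) ≤ ‖u x‖^2)]
    have : (0:ℝ) ≤ ‖u x‖^2 := by positivity
    nlinarith [abs_nonneg (V x)]

lemma N_lb (V : ℝ → ℝ) {C : ℝ} (hVm : AEStronglyMeasurable V (volume : Measure ℝ))
    (hC : ∀ᵐ x : ℝ, |V x| ≤ C) (hneg : ∀ᵐ x : ℝ, -1 ≤ V x)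
    (u : ℝ → ℂ) (hu : MemLp u 2 (volume : Measure ℝ)) :
    -(((eLpNorm u 2 (volume : Measure ℝ)).toReal) ^ 2) ≤ ∫ x : ℝ, V x * ‖u x‖ ^ 2 := by
  rw [← integral_sq_eq u hu, ← integral_neg]
  apply integral_mono_ae ((integrable_sq u hu).neg) (integrable_Vsq V hVm hC u hu)
  filter_upwards [hneg] with x hx
  have h0 : (0:ℝ) ≤ ‖u x‖^2 := by positivity
  simp only [Pi.neg_apply]
  nlinarith

lemma N_abs (V : ℝ → ℝ) {C : ℝ} (hVm : AEStronglyMeasurable V (volume : Measure ℝ))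
    (hC : ∀ᵐ x : ℝ, |V x| ≤ C)
    (u : ℝ → ℂ) (hu : MemLp u 2 (volume : Measure ℝ)) :
    |∫ x : ℝ, V x * ‖u x‖ ^ 2| ≤ C * ((eLpNorm u 2 (volume : Measure ℝ)).toReal) ^ 2 := by
  rw [← integral_sq_eq u hu]
  calc |∫ x : ℝ, V x * ‖u x‖ ^ 2| ≤ ∫ x : ℝ, |V x * ‖u x‖ ^ 2| :=
        by simpa only [Real.norm_eq_abs] using norm_integral_le_integral_norm (μ := volume) (fun x : ℝ => V x * ‖u x‖ ^ 2)
    _ ≤ ∫ x : ℝ, C * ‖u x‖ ^ 2 := by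
        apply integral_mono_ae (integrable_Vsq V hVm hC u hu).abs
          ((integrable_sq u hu).const_mul C)
        filter_upwards [hC] with x hx
        rw [abs_mul, abs_of_nonneg (by positivity : (0:ℝ) ≤ ‖u x‖^2)]
        have : (0:ℝ) ≤ ‖u x‖^2 := by positivity
        nlinarith
    _ = C * ∫ x : ℝ, ‖u x‖ ^ 2 := integral_const_mul C _

lemma B_pos (u : ℝ → ℂ) (hu : MemLp u 2 (volume : Measure ℝ))
    (hu0 : ¬ u =ᵐ[(volume : Measure ℝ)] (0 : ℝ → ℂ)) :
    0 < ((eLpNorm u 2 (volume : Measure ℝ)).toReal) ^ 2 := by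
  have h0 : eLpNorm u 2 (volume : Measure ℝ) ≠ 0 := by
    rw [Ne, eLpNorm_eq_zero_iff hu.aestronglyMeasurable two_ne_zero]
    exact hu0
  have : 0 < (eLpNorm u 2 (volume : Measure ℝ)).toReal :=
    ENNReal.toReal_pos h0 hu.2.ne
  positivity

lemma alg_lb (N A B β : ℝ) (hB : 0 < B) (hA : 0 ≤ A) (hN1 : -B ≤ N) (hβ : 0 < β) :
    -(1/β) ≤ N / (A + β * B) := by
  have hD : 0 < A + β * B := by nlinarith
  rw [neg_div', div_le_div_iff₀ hβ hD]
  nlinarith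

lemma alg_abs (N A B β C : ℝ) (hB : 0 < B) (hA : 0 ≤ A) (hN2 : |N| ≤ C * B) (hβ : 0 < β) :
    |N / (A + β * B)| ≤ C / β := by
  have hD : 0 < A + β * B := by nlinarith
  have hC : 0 ≤ C := by nlinarith [abs_nonneg N]
  rw [abs_div, abs_of_pos hD, div_le_div_iff₀ hD hβ]
  nlinarith [abs_nonneg N]

lemma alg_mono (N A B β₁ β₂ : ℝ) (hB : 0 < B) (hA : 0 ≤ A) (h1 : 0 < β₁) (h12 : β₁ ≤ β₂)
    (hneg : N / (A + β₂ * B) < 0) :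
    N / (A + β₁ * B) ≤ N / (A + β₂ * B) := by
  have h2 : 0 < β₂ := lt_of_lt_of_le h1 h12
  have hD1 : 0 < A + β₁ * B := by nlinarith
  have hD2 : 0 < A + β₂ * B := by nlinarith
  have hN : N < 0 := by
    by_contra h
    push_neg at h
    exact absurd (div_nonneg h hD2.le) (not_le.2 hneg)
  rw [div_le_div_iff₀ hD1 hD2]
  nlinarith [mul_nonneg (mul_nonneg (sub_nonneg.2 h12) hB.le) (neg_nonneg.2 hN.le)]

lemma alg_diff (N A B β₁ β₂ C : ℝ) (hB : 0 < B) (hA : 0 ≤ A) (hN2 : |N| ≤ C * B)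
    (h1 : 0 < β₁) (h2 : 0 < β₂) :
    |N / (A + β₁ * B) - N / (A + β₂ * B)| ≤ C * |β₁ - β₂| / (β₁ * β₂) := by
  have hD1 : 0 < A + β₁ * B := by nlinarith
  have hD2 : 0 < A + β₂ * B := by nlinarith
  have hC : 0 ≤ C := by nlinarith [abs_nonneg N]
  have key : N / (A + β₁ * B) - N / (A + β₂ * B)
      = N * (β₂ - β₁) * B / ((A + β₁ * B) * (A + β₂ * B)) := by
    field_simp
    ring
  rw [key, abs_div, abs_of_pos (by positivity : (0:ℝ) < (A + β₁ * B) * (A + β₂ * B))]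
  have hnum : |N * (β₂ - β₁) * B| ≤ C * B * |β₁ - β₂| * B := by
    rw [abs_mul, abs_mul, abs_of_pos hB, abs_sub_comm]
    have h0 := abs_nonneg (β₁ - β₂)
    nlinarith [mul_le_mul_of_nonneg_right hN2 (mul_nonneg h0 hB.le)]
  calc |N * (β₂ - β₁) * B| / ((A + β₁ * B) * (A + β₂ * B))
      ≤ (C * B * |β₁ - β₂| * B) / ((β₁ * B) * (β₂ * B)) := by
        apply div_le_div₀ (by positivity) hnum (by positivity)
        nlinarith [sq_nonneg A, mul_nonneg hA (mul_pos h1 hB).le, mul_nonneg hA (mul_pos h2 hB).le, mul_pos (mul_pos h1 hB) (mul_pos h2 hB)]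
    _ = C * |β₁ - β₂| / (β₁ * β₂) := by
        field_simp



section main
variable (V : ℝ → ℝ) {C : ℝ}

lemma sum_memℒp {j : ℕ} {f : Fin j → ℝ → ℂ} (hh1 : ∀ i, MemLp (f i) 2 (volume : Measure ℝ))
    (c : Fin j → ℂ) : MemLp (fun x => ∑ i, c i * f i x) 2 (volume : Measure ℝ) :=
  memLp_finset_sum Finset.univ (fun i _ => (hh1 i).const_mul (c i))

-- the L² norm bounds for the rayleigh quotient
lemma rayleigh_lb (hVm : AEStronglyMeasurable V (volume : Measure ℝ))
    (hC : ∀ᵐ x : ℝ, |V x| ≤ C) (hneg : ∀ᵐ x : ℝ, -1 ≤ V x)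
    {β : ℝ} (hβ : 0 < β) (u u' : ℝ → ℂ) (hu : MemLp u 2 (volume : Measure ℝ))
    (hu0 : ¬ u =ᵐ[(volume : Measure ℝ)] (0 : ℝ → ℂ)) :
    -(1/β) ≤ rayleigh V β u u' :=
  alg_lb _ _ _ _ (B_pos u hu hu0) (by positivity) (N_lb V hVm hC hneg u hu) hβ

lemma rayleigh_abs (hVm : AEStronglyMeasurable V (volume : Measure ℝ))
    (hC : ∀ᵐ x : ℝ, |V x| ≤ C)
    {β : ℝ} (hβ : 0 < β) (u u' : ℝ → ℂ) (hu : MemLp u 2 (volume : Measure ℝ))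
    (hu0 : ¬ u =ᵐ[(volume : Measure ℝ)] (0 : ℝ → ℂ)) :
    |rayleigh V β u u'| ≤ C / β :=
  alg_abs _ _ _ _ _ (B_pos u hu hu0) (by positivity) (N_abs V hVm hC u hu) hβ

lemma rayleigh_mono {β₁ β₂ : ℝ} (h1 : 0 < β₁) (h12 : β₁ ≤ β₂) (u u' : ℝ → ℂ)
    (hu : MemLp u 2 (volume : Measure ℝ))
    (hu0 : ¬ u =ᵐ[(volume : Measure ℝ)] (0 : ℝ → ℂ))
    (hneg : rayleigh V β₂ u u' < 0) :
    rayleigh V β₁ u u' ≤ rayleigh V β₂ u u' :=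
  alg_mono _ _ _ _ _ (B_pos u hu hu0) (by positivity) h1 h12 hneg

lemma rayleigh_diff (hVm : AEStronglyMeasurable V (volume : Measure ℝ))
    (hC : ∀ᵐ x : ℝ, |V x| ≤ C)
    {β₁ β₂ : ℝ} (h1 : 0 < β₁) (h2 : 0 < β₂) (u u' : ℝ → ℂ)
    (hu : MemLp u 2 (volume : Measure ℝ))
    (hu0 : ¬ u =ᵐ[(volume : Measure ℝ)] (0 : ℝ → ℂ)) :
    |rayleigh V β₁ u u' - rayleigh V β₂ u u'| ≤ C * |β₁ - β₂| / (β₁ * β₂) :=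
  alg_diff _ _ _ _ _ _ (B_pos u hu hu0) (by positivity) (N_abs V hVm hC u hu) h1 h2
end main

section sets
variable (V : ℝ → ℝ) {C : ℝ}

lemma muSet_lb (hVm : AEStronglyMeasurable V (volume : Measure ℝ))
    (hC : ∀ᵐ x : ℝ, |V x| ≤ C) (hneg : ∀ᵐ x : ℝ, -1 ≤ V x)
    {β : ℝ} (hβ : 0 < β) {j : ℕ} {m : ℝ} (hm : m ∈ muSet V β j) : -(1/β) ≤ m := by
  obtain ⟨f, f', hh1, hind, rfl⟩ := hm
  by_cases hE : Nonempty {c : Fin j → ℂ // c ≠ 0}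
  · have hbdd : BddAbove (Set.range fun c : {c : Fin j → ℂ // c ≠ 0} =>
        rayleigh V β (fun x => ∑ i, (c : Fin j → ℂ) i * f i x)
          (fun x => ∑ i, (c : Fin j → ℂ) i * f' i x)) := by
      refine ⟨C/β, ?_⟩
      rintro _ ⟨c, rfl⟩
      exact (abs_le.1 (rayleigh_abs V hVm hC hβ _ _ (sum_memℒp (fun i => (hh1 i).1) c.1)
        (fun h => c.2 (hind c.1 h)))).2
    exact le_ciSup_of_le hbdd hE.some
      (rayleigh_lb V hVm hC hneg hβ _ _ (sum_memℒp (fun i => (hh1 i).1) _)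
        (fun h => hE.some.2 (hind _ h)))
  · rw [not_nonempty_iff] at hE
    rw [Real.iSup_of_isEmpty]
    simp only [neg_nonpos]
    positivity

lemma muSet_bddBelow (hVm : AEStronglyMeasurable V (volume : Measure ℝ))
    (hC : ∀ᵐ x : ℝ, |V x| ≤ C) (hneg : ∀ᵐ x : ℝ, -1 ≤ V x)
    {β : ℝ} (hβ : 0 < β) {j : ℕ} : BddBelow (muSet V β j) :=
  ⟨-(1/β), fun _ hm => muSet_lb V hVm hC hneg hβ hm⟩

lemma muMinMax_lb (hVm : AEStronglyMeasurable V (volume : Measure ℝ))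
    (hC : ∀ᵐ x : ℝ, |V x| ≤ C) (hneg : ∀ᵐ x : ℝ, -1 ≤ V x)
    {β : ℝ} (hβ : 0 < β) {j : ℕ} : -(1/β) ≤ muMinMax V j β := by
  rcases eq_empty_or_nonempty (muSet V β j) with h | h
  · rw [muMinMax, h, Real.sInf_empty]
    simp only [neg_nonpos]
    positivity
  · exact le_csInf h fun m hm => muSet_lb V hVm hC hneg hβ hm

lemma exists_le (hVm : AEStronglyMeasurable V (volume : Measure ℝ))
    (hC : ∀ᵐ x : ℝ, |V x| ≤ C)
    {β₁ β₂ : ℝ} (h1 : 0 < β₁) (h12 : β₁ ≤ β₂) {j : ℕ} {m₂ : ℝ}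
    (hm : m₂ ∈ muSet V β₂ j) (hm2 : m₂ < 0) :
    ∃ m₁ ∈ muSet V β₁ j, m₁ ≤ m₂ := by
  have h2 : 0 < β₂ := h1.trans_le h12
  obtain ⟨f, f', hh1, hind, rfl⟩ := hm
  refine ⟨_, ⟨f, f', hh1, hind, rfl⟩, ?_⟩
  have hE : Nonempty {c : Fin j → ℂ // c ≠ 0} := by
    by_contra hE
    rw [not_nonempty_iff] at hE
    rw [Real.iSup_of_isEmpty] at hm2
    linarith
  have hbdd2 : BddAbove (Set.range fun c : {c : Fin j → ℂ // c ≠ 0} =>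
      rayleigh V β₂ (fun x => ∑ i, (c : Fin j → ℂ) i * f i x)
        (fun x => ∑ i, (c : Fin j → ℂ) i * f' i x)) := by
    refine ⟨C/β₂, ?_⟩
    rintro _ ⟨c, rfl⟩
    exact (abs_le.1 (rayleigh_abs V hVm hC h2 _ _ (sum_memℒp (fun i => (hh1 i).1) c.1)
      (fun h => c.2 (hind c.1 h)))).2
  apply ciSup_le
  intro c
  have hle2 := le_ciSup hbdd2 c
  have hneg2 : rayleigh V β₂ (fun x => ∑ i, (c : Fin j → ℂ) i * f i x)
      (fun x => ∑ i, (c : Fin j → ℂ) i * f' i x) < 0 := lt_of_le_of_lt hle2 hm2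
  exact (rayleigh_mono V h1 h12 _ _ (sum_memℒp (fun i => (hh1 i).1) c.1)
    (fun h => c.2 (hind c.1 h)) hneg2).trans hle2

lemma muSet_nonempty_trans {j : ℕ} {β₁ β₂ : ℝ} (h : (muSet V β₂ j).Nonempty) :
    (muSet V β₁ j).Nonempty := by
  obtain ⟨m, f, f', hh1, hind, rfl⟩ := h
  exact ⟨_, f, f', hh1, hind, rfl⟩

lemma muMinMax_mono (hVm : AEStronglyMeasurable V (volume : Measure ℝ))
    (hC : ∀ᵐ x : ℝ, |V x| ≤ C) (hneg : ∀ᵐ x : ℝ, -1 ≤ V x)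
    {j : ℕ} {β₁ β₂ : ℝ} (h1 : 0 < β₁) (h12 : β₁ ≤ β₂)
    (hneg2 : muMinMax V j β₂ < 0) : muMinMax V j β₁ ≤ muMinMax V j β₂ := by
  have hS2 : (muSet V β₂ j).Nonempty := by
    by_contra h
    rw [not_nonempty_iff_eq_empty] at h
    rw [muMinMax, h, Real.sInf_empty] at hneg2
    linarith
  refine le_of_forall_pos_le_add ?_
  intro ε hε
  have hε'pos : 0 < min ε (-(muMinMax V j β₂)/2) := lt_min hε (by linarith)
  obtain ⟨m₂, hm₂S, hm₂lt⟩ := Real.lt_sInf_add_pos hS2 hε'pos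
  have hm₂neg : m₂ < 0 := by
    have : m₂ < muMinMax V j β₂ + min ε (-(muMinMax V j β₂)/2) := hm₂lt
    linarith [min_le_right ε (-(muMinMax V j β₂)/2)]
  obtain ⟨m₁, hm₁S, hm₁le⟩ := exists_le V hVm hC h1 h12 hm₂S hm₂neg
  have hle := csInf_le (muSet_bddBelow V hVm hC hneg h1) hm₁S
  have : m₂ < muMinMax V j β₂ + min ε (-(muMinMax V j β₂)/2) := hm₂lt
  have := min_le_left ε (-(muMinMax V j β₂)/2)
  calc muMinMax V j β₁ ≤ m₁ := hle
    _ ≤ m₂ := hm₁le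
    _ ≤ muMinMax V j β₂ + ε := by linarith

end sets

section lip
variable (V : ℝ → ℝ) {C : ℝ}

lemma exists_close (hVm : AEStronglyMeasurable V (volume : Measure ℝ))
    (hC : ∀ᵐ x : ℝ, |V x| ≤ C) (hC0 : 0 ≤ C)
    {β₁ β₂ : ℝ} (h1 : 0 < β₁) (h2 : 0 < β₂) {j : ℕ} {m₁ : ℝ}
    (hm : m₁ ∈ muSet V β₁ j) :
    ∃ m₂ ∈ muSet V β₂ j, |m₁ - m₂| ≤ C * |β₁ - β₂| / (β₁ * β₂) := by
  obtain ⟨f, f', hh1, hind, rfl⟩ := hm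
  refine ⟨_, ⟨f, f', hh1, hind, rfl⟩, ?_⟩
  have hK0 : 0 ≤ C * |β₁ - β₂| / (β₁ * β₂) := by positivity
  by_cases hE : Nonempty {c : Fin j → ℂ // c ≠ 0}
  · have hbdd1 : BddAbove (Set.range fun c : {c : Fin j → ℂ // c ≠ 0} =>
        rayleigh V β₁ (fun x => ∑ i, (c : Fin j → ℂ) i * f i x)
          (fun x => ∑ i, (c : Fin j → ℂ) i * f' i x)) := by
      refine ⟨C/β₁, ?_⟩
      rintro _ ⟨c, rfl⟩
      exact (abs_le.1 (rayleigh_abs V hVm hC h1 _ _ (sum_memℒp (fun i => (hh1 i).1) c.1)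
        (fun h => c.2 (hind c.1 h)))).2
    have hbdd2 : BddAbove (Set.range fun c : {c : Fin j → ℂ // c ≠ 0} =>
        rayleigh V β₂ (fun x => ∑ i, (c : Fin j → ℂ) i * f i x)
          (fun x => ∑ i, (c : Fin j → ℂ) i * f' i x)) := by
      refine ⟨C/β₂, ?_⟩
      rintro _ ⟨c, rfl⟩
      exact (abs_le.1 (rayleigh_abs V hVm hC h2 _ _ (sum_memℒp (fun i => (hh1 i).1) c.1)
        (fun h => c.2 (hind c.1 h)))).2
    rw [abs_sub_le_iff]
    constructor
    · rw [sub_le_iff_le_add]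
      apply ciSup_le
      intro c
      have hd := rayleigh_diff V hVm hC h1 h2
        (fun x => ∑ i, (c : Fin j → ℂ) i * f i x)
        (fun x => ∑ i, (c : Fin j → ℂ) i * f' i x)
        (sum_memℒp (fun i => (hh1 i).1) c.1) (fun h => c.2 (hind c.1 h))
      have h' := (abs_sub_le_iff.1 hd).1
      have h'' := le_ciSup hbdd2 c
      linarith
    · rw [sub_le_iff_le_add]
      apply ciSup_le
      intro c
      have hd := rayleigh_diff V hVm hC h1 h2
        (fun x => ∑ i, (c : Fin j → ℂ) i * f i x)
        (fun x => ∑ i, (c : Fin j → ℂ) i * f' i x)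
        (sum_memℒp (fun i => (hh1 i).1) c.1) (fun h => c.2 (hind c.1 h))
      have h' := (abs_sub_le_iff.1 hd).2
      have h'' := le_ciSup hbdd1 c
      linarith
  · rw [not_nonempty_iff] at hE
    rw [Real.iSup_of_isEmpty, Real.iSup_of_isEmpty]
    simpa using hK0

lemma muMinMax_close (hVm : AEStronglyMeasurable V (volume : Measure ℝ))
    (hC : ∀ᵐ x : ℝ, |V x| ≤ C) (hC0 : 0 ≤ C) (hneg : ∀ᵐ x : ℝ, -1 ≤ V x)
    {β₁ β₂ : ℝ} (h1 : 0 < β₁) (h2 : 0 < β₂) {j : ℕ}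
    (hS1 : (muSet V β₁ j).Nonempty) :
    |muMinMax V j β₁ - muMinMax V j β₂| ≤ C * |β₁ - β₂| / (β₁ * β₂) := by
  have hS2 : (muSet V β₂ j).Nonempty := muSet_nonempty_trans V hS1
  have hKsymm : C * |β₂ - β₁| / (β₂ * β₁) = C * |β₁ - β₂| / (β₁ * β₂) := by
    rw [abs_sub_comm, mul_comm β₂]
  unfold muMinMax
  rw [abs_sub_le_iff]
  constructor
  · rw [sub_le_comm]
    apply le_csInf hS2
    intro m₂ hm₂
    obtain ⟨m₁, hm₁S, hd⟩ := exists_close V hVm hC hC0 h2 h1 hm₂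
    rw [hKsymm] at hd
    have := csInf_le (muSet_bddBelow V hVm hC hneg h1) hm₁S
    have := (abs_sub_le_iff.1 hd).2
    linarith
  · rw [sub_le_comm]
    apply le_csInf hS1
    intro m₁ hm₁
    obtain ⟨m₂, hm₂S, hd⟩ := exists_close V hVm hC hC0 h1 h2 hm₁
    have := csInf_le (muSet_bddBelow V hVm hC hneg h2) hm₂S
    have := (abs_sub_le_iff.1 hd).2
    linarith

end lip

lemma Vbd (V : ℝ → ℝ) (hV : MemLp V ⊤ (volume : Measure ℝ)) :
    ∀ᵐ x : ℝ, |V x| ≤ (eLpNorm V ⊤ (volume : Measure ℝ)).toReal := by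
  have h := ae_le_eLpNormEssSup (f := V) (μ := (volume : Measure ℝ))
  have hlt : eLpNormEssSup V (volume : Measure ℝ) < ⊤ := by
    rw [← eLpNorm_exponent_top]; exact hV.2
  filter_upwards [h] with x hx
  have : (‖V x‖₊ : ℝ≥0∞).toReal ≤ (eLpNormEssSup V (volume : Measure ℝ)).toReal :=
    ENNReal.toReal_mono hlt.ne hx
  simpa [eLpNorm_exponent_top, Real.norm_eq_abs] using this

lemma Vneg_bd (V : ℝ → ℝ)
    (hVneg : eLpNorm (fun x => max (-V x) 0) ⊤ (volume : Measure ℝ) ≤ 1) :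
    ∀ᵐ x : ℝ, -1 ≤ V x := by
  have h := ae_le_eLpNormEssSup (f := fun x => max (-V x) 0) (μ := (volume : Measure ℝ))
  rw [eLpNorm_exponent_top] at hVneg
  filter_upwards [h] with x hx
  have h1 : (‖max (-V x) 0‖₊ : ℝ≥0∞) ≤ 1 := hx.trans hVneg
  have h2 : ‖max (-V x) 0‖ ≤ 1 := by
    have := ENNReal.toReal_mono (by simp) h1
    simpa using this
  rw [Real.norm_eq_abs, abs_of_nonneg (le_max_right _ _)] at h2
  have := le_max_left (-V x) 0
  linarith [le_trans this h2]

section mainproof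
variable (V : ℝ → ℝ) {C : ℝ}

lemma sol_facts (hVm : AEStronglyMeasurable V (volume : Measure ℝ))
    (hC : ∀ᵐ x : ℝ, |V x| ≤ C) (hneg : ∀ᵐ x : ℝ, -1 ≤ V x) {j : ℕ} {x : ℝ}
    (hx0 : 0 < x) (hx1 : x ≤ 1)
    (hxeq : x = -(1 / muMinMax V j x) * (2 + 1 / muMinMax V j x)) :
    muMinMax V j x * x ≥ -1 ∧ -1 ≤ muMinMax V j x ∧ muMinMax V j x < -(1/2) ∧
      x * (muMinMax V j x)^2 + 2 * (muMinMax V j x) + 1 = 0 := by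
  set m := muMinMax V j x with hm
  have hmneg : m < 0 := by
    rcases lt_trichotomy m 0 with h | h | h
    · exact h
    · rw [h] at hxeq
      norm_num at hxeq
      linarith
    · have h1 : 0 < 1/m := by positivity
      nlinarith
  have hm0' : m ≠ 0 := ne_of_lt hmneg
  have heqx : x * m^2 + 2*m + 1 = 0 := by
    rw [hxeq]
    field_simp
    ring
  have hlb : -(1/x) ≤ m := muMinMax_lb V hVm hC hneg hx0
  have hxm : -1 ≤ x * m := by
    have := mul_le_mul_of_nonneg_left hlb hx0.le
    have hx' : x * -(1/x) = -1 := by field_simp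
    linarith
  have hm12 : m < -(1/2) := by nlinarith
  have hmge : -1 ≤ m := by
    nlinarith [mul_nonpos_of_nonneg_of_nonpos (by linarith : (0:ℝ) ≤ x*m + 1) hmneg.le]
  exact ⟨by linarith, hmge, hm12, heqx⟩

lemma sol_unique (hVm : AEStronglyMeasurable V (volume : Measure ℝ))
    (hC : ∀ᵐ x : ℝ, |V x| ≤ C) (hneg : ∀ᵐ x : ℝ, -1 ≤ V x) {j : ℕ} {b₁ b₂ : ℝ}
    (h₁0 : 0 < b₁) (h₁1 : b₁ ≤ 1)
    (h₁eq : b₁ = -(1 / muMinMax V j b₁) * (2 + 1 / muMinMax V j b₁))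
    (h₂0 : 0 < b₂) (h₂1 : b₂ ≤ 1)
    (h₂eq : b₂ = -(1 / muMinMax V j b₂) * (2 + 1 / muMinMax V j b₂))
    (hlt : b₁ < b₂) : False := by
  obtain ⟨_, hge₁, hlt₁, heq₁⟩ := sol_facts V hVm hC hneg h₁0 h₁1 h₁eq
  obtain ⟨_, hge₂, hlt₂, heq₂⟩ := sol_facts V hVm hC hneg h₂0 h₂1 h₂eq
  set m₁ := muMinMax V j b₁
  set m₂ := muMinMax V j b₂
  have hmono : m₁ ≤ m₂ := muMinMax_mono V hVm hC hneg h₁0 hlt.le (by linarith)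
  have hf2 : 2*m₁*m₂ + m₁ + m₂ ≤ 0 := by
    have := mul_le_mul_of_nonpos_right hge₁ (by linarith : 2*m₂+1 ≤ 0)
    nlinarith
  have hkey : (m₂ - m₁) * (2*m₁*m₂ + m₁ + m₂) ≤ 0 :=
    mul_nonpos_of_nonneg_of_nonpos (by linarith) hf2
  have hm₁0 : m₁ ≠ 0 := by intro h; rw [h] at hlt₁; linarith
  have hm₂0 : m₂ ≠ 0 := by intro h; rw [h] at hlt₂; linarith
  have hmsq : 0 < m₁^2 * m₂^2 := by positivity
  have hid : (b₂ - b₁) * (m₁^2 * m₂^2) = (m₂ - m₁) * (2*m₁*m₂ + m₁ + m₂) := by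
    linear_combination m₁^2 * heq₂ - m₂^2 * heq₁
  nlinarith [mul_pos (sub_pos.2 hlt) hmsq]

end mainproof


/-- Existence and uniqueness of `β_j`: if `‖V⁻‖_∞ ≤ 1` and `μ_j(0₊) < -1/2`
(i.e. `μ_j(β) < -1/2` for some `β > 0`), then there is a unique `β_j ∈ (0,1]` with
`β_j = -(1/μ_j(β_j))(2 + 1/μ_j(β_j))`. -/
theorem exists_unique_betaj
    (V : ℝ → ℝ) (hV : MemLp V ⊤ (volume : Measure ℝ))
    (hV0 : Tendsto V (cocompact ℝ) (nhds 0))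
    (hVneg : eLpNorm (fun x => max (-V x) 0) ⊤ (volume : Measure ℝ) ≤ 1)
    (j : ℕ) (hj : ∃ β : ℝ, 0 < β ∧ muMinMax V j β < -(1/2)) :
    ∃! b : ℝ, b ∈ Set.Ioc (0 : ℝ) 1 ∧
      b = -(1 / muMinMax V j b) * (2 + 1 / muMinMax V j b) := by
  obtain ⟨β₀, hβ₀, hm0lt⟩ := hj
  set C : ℝ := (eLpNorm V ⊤ (volume : Measure ℝ)).toReal with hCdef
  have hC : ∀ᵐ x : ℝ, |V x| ≤ C := Vbd V hV
  have hC0 : 0 ≤ C := ENNReal.toReal_nonneg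
  have hneg : ∀ᵐ x : ℝ, -1 ≤ V x := Vneg_bd V hVneg
  have hVm : AEStronglyMeasurable V (volume : Measure ℝ) := hV.aestronglyMeasurable
  set m : ℝ → ℝ := muMinMax V j with hmdef
  -- muSet is nonempty (uniformly in β)
  have hS0 : (muSet V β₀ j).Nonempty := by
    by_contra h
    rw [not_nonempty_iff_eq_empty] at h
    rw [hmdef] at hm0lt
    rw [muMinMax, h, Real.sInf_empty] at hm0lt
    linarith
  have hSne : ∀ β : ℝ, (muSet V β j).Nonempty := fun β => muSet_nonempty_trans V hS0
  set m₀ : ℝ := m β₀ with hm₀def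
  have hm₀ : m₀ < -(1/2) := hm0lt
  have hm₀lb : -(1/β₀) ≤ m₀ := muMinMax_lb V hVm hC hneg hβ₀
  have hm₀sq : 0 < m₀^2 := by nlinarith
  set a : ℝ := min β₀ (min 1 ((-(2*m₀+1))/(2*m₀^2))) with hadef
  have ha0 : 0 < a := by
    have hpos : 0 < -(2*m₀+1) := by linarith
    exact lt_min hβ₀ (lt_min one_pos (div_pos hpos (by positivity)))
  have ha1 : a ≤ 1 := le_trans (min_le_right _ _) (min_le_left _ _)
  have haβ₀ : a ≤ β₀ := min_le_left _ _
  have ha3 : a ≤ (-(2*m₀+1))/(2*m₀^2) := le_trans (min_le_right _ _) (min_le_right _ _)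
  have hma : m a ≤ m₀ := muMinMax_mono V hVm hC hneg ha0 haβ₀ (by linarith)
  have hmalb : -(1/a) ≤ m a := muMinMax_lb V hVm hC hneg ha0
  set G : ℝ → ℝ := fun β => β * (m β)^2 + 2*(m β) + 1 with hGdef
  -- G a < 0
  have ham : -1 ≤ a * m a := by
    have := mul_le_mul_of_nonneg_left hmalb ha0.le
    have hx' : a * -(1/a) = -1 := by field_simp
    linarith
  have hβ₀m : -1 ≤ β₀ * m₀ := by
    have := mul_le_mul_of_nonneg_left hm₀lb hβ₀.le
    have hx' : β₀ * -(1/β₀) = -1 := by field_simp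
    linarith
  have ham₀ : -1 ≤ a * m₀ := by nlinarith
  have hfac : 0 ≤ (m₀ - m a) * (a * (m a + m₀) + 2) := by
    apply mul_nonneg (by linarith)
    nlinarith
  have ha5 : a * m₀^2 ≤ (-(2*m₀+1))/2 := by
    have h := mul_le_mul_of_nonneg_right ha3 (sq_nonneg m₀)
    have he : (-(2*m₀+1))/(2*m₀^2) * m₀^2 = (-(2*m₀+1))/2 := by
      rw [div_mul_eq_mul_div, mul_div_mul_right _ _ hm₀sq.ne']
    linarith [he ▸ h]
  have hGa : G a < 0 := by
    simp only [hGdef]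
    nlinarith
  have hG1 : 0 ≤ G 1 := by
    simp only [hGdef]
    nlinarith [sq_nonneg (m 1 + 1)]
  -- continuity of m on [a, 1]
  have key : ∀ x ∈ Icc a 1, ∀ y ∈ Icc a 1, |m x - m y| ≤ (C/(a*a)) * |x - y| := by
    intro x hx y hy
    have hx0 : 0 < x := lt_of_lt_of_le ha0 hx.1
    have hy0 : 0 < y := lt_of_lt_of_le ha0 hy.1
    have h := muMinMax_close V hVm hC hC0 hneg hx0 hy0 (hSne x)
    have h2 : C * |x - y| / (x * y) ≤ C * |x - y| / (a * a) := by
      apply div_le_div_of_nonneg_left (by positivity) (by positivity)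
      exact mul_le_mul hx.1 hy.1 ha0.le (le_trans ha0.le hx.1)
    calc |m x - m y| ≤ C * |x - y| / (x * y) := h
      _ ≤ C * |x - y| / (a * a) := h2
      _ = (C/(a*a)) * |x - y| := by ring
  have hlip : LipschitzOnWith (Real.toNNReal (C/(a*a))) m (Icc a 1) := by
    apply LipschitzOnWith.of_dist_le_mul
    intro x hx y hy
    rw [Real.dist_eq, Real.dist_eq, Real.coe_toNNReal _ (by positivity)]
    exact key x hx y hy
  have hmc : ContinuousOn m (Icc a 1) := hlip.continuousOn
  have hGc : ContinuousOn G (Icc a 1) := by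
    apply ContinuousOn.add
    apply ContinuousOn.add
    · exact continuousOn_id.mul (hmc.pow 2)
    · exact continuousOn_const.mul hmc
    · exact continuousOn_const
  have hivt := intermediate_value_Icc ha1 hGc
  have h0mem : (0:ℝ) ∈ Icc (G a) (G 1) := ⟨hGa.le, hG1⟩
  obtain ⟨b, hbmem, hGb⟩ := hivt h0mem
  have hb0 : 0 < b := lt_of_lt_of_le ha0 hbmem.1
  have hb1 : b ≤ 1 := hbmem.2
  have hmb0 : m b ≠ 0 := by
    intro h
    simp only [hGdef] at hGb
    rw [h] at hGb
    norm_num at hGb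
  have heqb : b = -(1 / m b) * (2 + 1 / m b) := by
    have hGb' : b * (m b)^2 + 2*(m b) + 1 = 0 := hGb
    have h2 : -(1 / m b) * (2 + 1 / m b) = b := by
      field_simp
      linarith [hGb']
    exact h2.symm
    
  refine ⟨b, ⟨⟨hb0, hb1⟩, heqb⟩, ?_⟩
  intro y ⟨⟨hy0, hy1⟩, hyeq⟩
  by_contra hne
  rcases lt_or_gt_of_ne hne with h | h
  · exact sol_unique V hVm hC hneg hy0 hy1 hyeq hb0 hb1 heqb h
  · exact sol_unique V hVm hC hneg hb0 hb1 heqb hy0 hy1 hyeq h
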